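/- Adopt the FAVOR+S binding setup: fix integers D, M, N ≥ 1, a fixed channel (u, n) ∈ {1,…,M}×{1,…,N} and positions i, j; for each channel pair (m, w) ∈ {1,…,M}×{1,…,N} let k̄_j^{(m,w)} ∈ ℝ^D and q̄_i^{(m,w)} ∈ ℝ^D be fixed vectors and let a^{(m,w)} ∈ {−1,+1}^D be mutually independent random vectors with i.i.d. Rademacher entries; define k_j^{(m,w)} = k̄_j^{(m,w)} ⊙ a^{(m,w)} and q_i^{(m,w)} = q̄_i^{(m,w)} ⊙ a^{(m,w)}. Let α > 0, assume ⟨k̄_j^{(u,n)}, q̄_i^{(u,n)}⟩ ≠ 0 and N·M ≥ 2, and let P = ℙ{ ⟨Σ_{w=1}^N k_j^{(u,w)}, Σ_{t=1}^M q_i^{(t,n)}⟩ ∉ [1−α, 1+α]·⟨k̄_j^{(u,n)}, q̄_i^{(u,n)}⟩ }. For (t, w) with (u, w) ≠ (t, n) set Ξ_{(u,w)}^{(t,n)} = α²·⟨k̄_j^{(u,n)}, q̄_i^{(u,n)}⟩² / Σ_{p=1}^D (k̄_j^{(u,w)})_p²·(q̄_i^{(t,n)})_p², assuming all these denominators are positive.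 Then P ≤ 2·Σ_{(w,t) ∈ {1,…,N}×{1,…,M}, (u,w) ≠ (t,n)} exp( − Ξ_{(u,w)}^{(t,n)} / (2·(N·M − 1)²) ). -/

import Mathlib

open MeasureTheory ProbabilityTheory
open scoped ENNReal NNReal

/-- The Rademacher distribution on `ℝ`: uniform on `{-1, +1}`. -/
noncomputable def rademacherMeasure : Measure ℝ :=
  (2 : ℝ≥0∞)⁻¹ • Measure.dirac (1 : ℝ) + (2 : ℝ≥0∞)⁻¹ • Measure.dirac (-1 : ℝ)

/-- `Ξ = α²·c² / ∑_p (k̄)_p²·(q̄)_p²` where `c` is the intended signal. -/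
noncomputable def Xi (D : ℕ) (α c : ℝ) (kb qb : Fin D → ℝ) : ℝ :=
  α ^ 2 * c ^ 2 / ∑ p, (kb p) ^ 2 * (qb p) ^ 2

section aux
open Real
lemma integrable_dirac' {f : ℝ → ℝ} (a : ℝ) (hf : Measurable f) : Integrable f (Measure.dirac a) :=
  (integrable_const (f a)).congr (ae_eq_dirac f).symm

lemma rademacher_integral_id : ∫ x, x ∂rademacherMeasure = 0 := by
  rw [rademacherMeasure, integral_add_measure, integral_smul_measure, integral_smul_measure,
    integral_dirac, integral_dirac]
  · norm_num
  · exact (integrable_dirac' _ measurable_id).smul_measure (by norm_num)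
  · exact (integrable_dirac' _ measurable_id).smul_measure (by norm_num)


lemma integrable_of_bound {Ω : Type*} [MeasurableSpace Ω] (μ : Measure Ω) [IsFiniteMeasure μ]
    {f : Ω → ℝ} (hf : Measurable f) (C : ℝ) (h : ∀ ω, |f ω| ≤ C) : Integrable f μ :=
  (integrable_const C).mono' hf.aestronglyMeasurable (ae_of_all _ h)

lemma chaos_integral {Ω : Type*} [MeasurableSpace Ω] (μ : Measure Ω) [IsProbabilityMeasure μ]
    {ι : Type*} [DecidableEq ι] {X : ι → Ω → ℝ}
    (hval : ∀ i ω, X i ω = 1 ∨ X i ω = -1)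
    (hmeas : ∀ i, Measurable (X i))
    (hindep : iIndepFun (m := fun _ : ι => (inferInstance : MeasurableSpace ℝ)) X μ)
    (hmean : ∀ i, ∫ ω, X i ω ∂μ = 0)
    {D : ℕ} (e1 e2 : Fin D → ι) (h1 : Function.Injective e1) (h2 : Function.Injective e2)
    (h12 : ∀ d d', e1 d ≠ e2 d')
    (c : Fin D → ℝ) (s : Finset (Fin D)) :
    ∫ ω, ∏ d ∈ s, Real.exp (c d * (X (e1 d) ω * X (e2 d) ω)) ∂μ
      = ∏ d ∈ s, Real.cosh (c d) := by
  classical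
  induction s using Finset.induction_on with
  | empty => simp
  | @insert d0 s hd0 ih =>
    set P : Ω → ℝ := fun ω => ∏ d ∈ s, Real.exp (c d * (X (e1 d) ω * X (e2 d) ω)) with hP
    have hfmeas : ∀ d : Fin D, Measurable fun ω => Real.exp (c d * (X (e1 d) ω * X (e2 d) ω)) :=
      fun d => Real.measurable_exp.comp (((hmeas (e1 d)).mul (hmeas (e2 d))).const_mul (c d))
    have hPmeas : Measurable P := Finset.measurable_prod _ fun d _ => hfmeas d
    have habs1 : ∀ i ω, |X i ω| = 1 := by
      intro i ω; rcases hval i ω with h | h <;> simp [h]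
    have hbd : ∀ (d : Fin D) ω, |Real.exp (c d * (X (e1 d) ω * X (e2 d) ω))| ≤ Real.exp |c d| := by
      intro d ω
      rw [abs_of_pos (Real.exp_pos _)]
      apply Real.exp_le_exp.2
      calc c d * (X (e1 d) ω * X (e2 d) ω) ≤ |c d * (X (e1 d) ω * X (e2 d) ω)| := le_abs_self _
        _ = |c d| := by rw [abs_mul, abs_mul, habs1, habs1, mul_one, mul_one]
    have hPbd : ∀ ω, |P ω| ≤ ∏ d ∈ s, Real.exp |c d| := by
      intro ω
      calc |P ω| ≤ ∏ d ∈ s, |Real.exp (c d * (X (e1 d) ω * X (e2 d) ω))| :=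
            (Finset.abs_prod s _).le
        _ ≤ ∏ d ∈ s, Real.exp |c d| :=
            Finset.prod_le_prod (fun d _ => abs_nonneg _) (fun d _ => hbd d ω)
    have hPint : Integrable P μ := integrable_of_bound μ hPmeas _ hPbd
    -- pointwise identity
    have key : ∀ ω, Real.exp (c d0 * (X (e1 d0) ω * X (e2 d0) ω))
        = Real.cosh (c d0) + (X (e1 d0) ω * X (e2 d0) ω) * Real.sinh (c d0) := by
      intro ω
      have : X (e1 d0) ω * X (e2 d0) ω = 1 ∨ X (e1 d0) ω * X (e2 d0) ω = -1 := by
        rcases hval (e1 d0) ω with h | h <;> rcases hval (e2 d0) ω with h' | h' <;>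
          simp [h, h']
      rcases this with h | h <;> rw [h]
      · simp [Real.cosh_add_sinh]
      · have := Real.cosh_sub_sinh (c d0)
        have h2 : c d0 * (-1) = -(c d0) := by ring
        rw [h2]; nlinarith [Real.cosh_sub_sinh (c d0)]
    -- independence of X (e1 d0) from the rest
    have hzero : ∫ ω, X (e1 d0) ω * (X (e2 d0) ω * P ω) ∂μ = 0 := by
      set T : Finset ι := insert (e2 d0) (s.image e1 ∪ s.image e2) with hT
      have hdisj : Disjoint {e1 d0} T := by
        rw [Finset.disjoint_singleton_left, hT]
        simp only [Finset.mem_insert, Finset.mem_union, Finset.mem_image, not_or]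
        refine ⟨h12 d0 d0, ?_, ?_⟩
        · rintro ⟨d, hd, hde⟩; exact hd0 (h1 hde ▸ hd)
        · rintro ⟨d, hd, hde⟩; exact h12 d0 d hde.symm
      have hIT := hindep.indepFun_finset {e1 d0} T hdisj hmeas
      have hmem1 : ∀ d : {x // x ∈ s}, e1 d.1 ∈ T := by
        intro d; rw [hT]
        exact Finset.mem_insert_of_mem (Finset.mem_union_left _
          (Finset.mem_image.2 ⟨d.1, d.2, rfl⟩))
      have hmem2 : ∀ d : {x // x ∈ s}, e2 d.1 ∈ T := by
        intro d; rw [hT]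
        exact Finset.mem_insert_of_mem (Finset.mem_union_right _
          (Finset.mem_image.2 ⟨d.1, d.2, rfl⟩))
      set φ : ({x // x ∈ ({e1 d0} : Finset ι)} → ℝ) → ℝ := fun x => x ⟨e1 d0, by simp⟩ with hφ
      set ψ : ({x // x ∈ T} → ℝ) → ℝ := fun x => x ⟨e2 d0, by rw [hT]; exact Finset.mem_insert_self _ _⟩ *
        ∏ d ∈ s.attach, Real.exp (c d.1 * (x ⟨e1 d.1, hmem1 d⟩ * x ⟨e2 d.1, hmem2 d⟩)) with hψ
      have hφm : Measurable φ := measurable_pi_apply _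
      have hψm : Measurable ψ := by
        apply (measurable_pi_apply _).mul
        exact Finset.measurable_prod _ fun d _ => Real.measurable_exp.comp
          (measurable_const.mul ((measurable_pi_apply _).mul (measurable_pi_apply _)))
      have hind : IndepFun (X (e1 d0)) (fun ω => X (e2 d0) ω * P ω) μ := by
        have h := hIT.comp hφm hψm
        have e1eq : (φ ∘ fun ω (i : {x // x ∈ ({e1 d0} : Finset ι)}) => X i.1 ω) = X (e1 d0) := rfl
        have e2eq : (ψ ∘ fun ω (i : {x // x ∈ T}) => X i.1 ω)
            = fun ω => X (e2 d0) ω * P ω := by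
          funext ω
          simp only [Function.comp_apply, hψ, hP]
          rw [Finset.prod_attach s (fun d => Real.exp (c d * (X (e1 d) ω * X (e2 d) ω)))]
        rwa [e1eq, e2eq] at h
      have h := hind.integral_fun_mul_eq_mul_integral (hmeas _).aestronglyMeasurable
        ((hmeas _).mul hPmeas).aestronglyMeasurable
      rw [hmean, zero_mul] at h
      exact h
    have hint2 : Integrable (fun ω => Real.sinh (c d0) * (X (e1 d0) ω * (X (e2 d0) ω * P ω))) μ := by
      apply Integrable.const_mul
      apply integrable_of_bound μ ((hmeas _).mul ((hmeas _).mul hPmeas)) (∏ d ∈ s, Real.exp |c d|)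
      intro ω
      rw [Pi.mul_apply, Pi.mul_apply, abs_mul, abs_mul, habs1, habs1, one_mul, one_mul]
      exact hPbd ω
    have congr1 : ∫ ω, ∏ d ∈ insert d0 s, Real.exp (c d * (X (e1 d) ω * X (e2 d) ω)) ∂μ
        = ∫ ω, (Real.cosh (c d0) * P ω + Real.sinh (c d0) * (X (e1 d0) ω * (X (e2 d0) ω * P ω))) ∂μ := by
      apply integral_congr_ae; apply ae_of_all; intro ω
      simp only [Finset.prod_insert hd0]
      rw [key ω]; ring
    rw [congr1, integral_add (hPint.const_mul _) hint2, integral_const_mul, integral_const_mul,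
      hzero, mul_zero, add_zero, ih, Finset.prod_insert hd0]


lemma chaos_tail {Ω : Type*} [MeasurableSpace Ω] (μ : Measure Ω) [IsProbabilityMeasure μ]
    {ι : Type*} [DecidableEq ι] {X : ι → Ω → ℝ}
    (hval : ∀ i ω, X i ω = 1 ∨ X i ω = -1)
    (hmeas : ∀ i, Measurable (X i))
    (hindep : iIndepFun (m := fun _ : ι => (inferInstance : MeasurableSpace ℝ)) X μ)
    (hmean : ∀ i, ∫ ω, X i ω ∂μ = 0)
    {D : ℕ} (e1 e2 : Fin D → ι) (h1 : Function.Injective e1) (h2 : Function.Injective e2)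
    (h12 : ∀ d d', e1 d ≠ e2 d')
    (c : Fin D → ℝ) (ε : ℝ) (hε : 0 < ε) (hV : 0 < ∑ d, (c d)^2) :
    μ {ω | ε < |∑ d, c d * (X (e1 d) ω * X (e2 d) ω)|}
      ≤ ENNReal.ofReal (2 * Real.exp (-(ε^2) / (2 * ∑ d, (c d)^2))) := by
  classical
  set V : ℝ := ∑ d, (c d)^2 with hVdef
  set S : Ω → ℝ := fun ω => ∑ d, c d * (X (e1 d) ω * X (e2 d) ω) with hS
  have habs1 : ∀ i ω, |X i ω| = 1 := by
    intro i ω; rcases hval i ω with h | h <;> simp [h]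
  have hSmeas : Measurable S :=
    Finset.measurable_sum _ fun d _ => ((hmeas (e1 d)).mul (hmeas (e2 d))).const_mul (c d)
  have hSbd : ∀ ω, |S ω| ≤ ∑ d, |c d| := by
    intro ω
    calc |S ω| ≤ ∑ d, |c d * (X (e1 d) ω * X (e2 d) ω)| := Finset.abs_sum_le_sum_abs _ _
      _ = ∑ d, |c d| := Finset.sum_congr rfl fun d _ => by
          rw [abs_mul, abs_mul, habs1, habs1, mul_one, mul_one]
  have hint : ∀ r : ℝ, Integrable (fun ω => Real.exp (r * S ω)) μ := by
    intro r
    apply integrable_of_bound μ ((hSmeas.const_mul r).exp)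
      (Real.exp (|r| * ∑ d, |c d|))
    intro ω
    rw [abs_of_pos (Real.exp_pos _)]
    apply Real.exp_le_exp.2
    calc r * S ω ≤ |r * S ω| := le_abs_self _
      _ = |r| * |S ω| := abs_mul _ _
      _ ≤ |r| * ∑ d, |c d| := by
          exact mul_le_mul_of_nonneg_left (hSbd ω) (abs_nonneg r)
  have hmgf : ∀ r : ℝ, mgf S μ r = ∏ d, Real.cosh (r * c d) := by
    intro r
    have heq : ∀ ω, Real.exp (r * S ω)
        = ∏ d, Real.exp ((r * c d) * (X (e1 d) ω * X (e2 d) ω)) := by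
      intro ω
      rw [← Real.exp_sum]
      congr 1
      rw [hS, Finset.mul_sum]
      exact Finset.sum_congr rfl fun d _ => by ring
    calc mgf S μ r = ∫ ω, ∏ d, Real.exp ((r * c d) * (X (e1 d) ω * X (e2 d) ω)) ∂μ :=
          integral_congr_ae (ae_of_all _ heq)
      _ = ∏ d, Real.cosh (r * c d) :=
          chaos_integral μ hval hmeas hindep hmean e1 e2 h1 h2 h12 _ _
  have hmgfle : ∀ r : ℝ, mgf S μ r ≤ Real.exp (r^2 * V / 2) := by
    intro r
    rw [hmgf]
    have hsum : ∑ d, (r * c d)^2 / 2 = r^2 * V / 2 := by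
      rw [← Finset.sum_div, hVdef, Finset.mul_sum]
      congr 1
      exact Finset.sum_congr rfl fun d _ => by ring
    calc ∏ d, Real.cosh (r * c d) ≤ ∏ d, Real.exp ((r * c d)^2 / 2) :=
          Finset.prod_le_prod (fun d _ => le_of_lt (Real.cosh_pos _))
            (fun d _ => Real.cosh_le_exp_half_sq _)
      _ = Real.exp (∑ d, (r * c d)^2 / 2) := (Real.exp_sum _ _).symm
      _ = Real.exp (r^2 * V / 2) := by rw [hsum]
  set t : ℝ := ε / V with htdef
  have ht : 0 < t := div_pos hε hV
  have harith : -t * ε + t^2 * V / 2 = -(ε^2) / (2*V) := by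
    rw [htdef]; field_simp; ring
  have hup : (μ {ω | ε ≤ S ω}).toReal ≤ Real.exp (-(ε^2) / (2*V)) := by
    calc (μ {ω | ε ≤ S ω}).toReal ≤ Real.exp (-t * ε) * mgf S μ t :=
          measure_ge_le_exp_mul_mgf ε ht.le (hint t)
      _ ≤ Real.exp (-t * ε) * Real.exp (t^2 * V / 2) := by
          exact mul_le_mul_of_nonneg_left (hmgfle t) (Real.exp_pos _).le
      _ = Real.exp (-(ε^2) / (2*V)) := by rw [← Real.exp_add, harith]
  have hlo : (μ {ω | S ω ≤ -ε}).toReal ≤ Real.exp (-(ε^2) / (2*V)) := by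
    calc (μ {ω | S ω ≤ -ε}).toReal ≤ Real.exp (-(-t) * (-ε)) * mgf S μ (-t) :=
          measure_le_le_exp_mul_mgf (-ε) (by linarith) (hint (-t))
      _ ≤ Real.exp (-t * ε) * Real.exp (t^2 * V / 2) := by
          have h1 : -(-t) * (-ε) = -t * ε := by ring
          have h2 : (-t)^2 = t^2 := by ring
          rw [h1]
          exact mul_le_mul_of_nonneg_left (h2 ▸ hmgfle (-t)) (Real.exp_pos _).le
      _ = Real.exp (-(ε^2) / (2*V)) := by rw [← Real.exp_add, harith]
  have hsub : {ω | ε < |S ω|} ⊆ {ω | ε ≤ S ω} ∪ {ω | S ω ≤ -ε} := by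
    intro ω hω
    simp only [Set.mem_setOf_eq] at hω
    simp only [Set.mem_union, Set.mem_setOf_eq]
    rcases lt_abs.1 hω with h | h
    · exact Or.inl h.le
    · exact Or.inr (by linarith)
  have hconv : ∀ s : Set Ω, (μ s).toReal ≤ Real.exp (-(ε^2) / (2*V)) →
      μ s ≤ ENNReal.ofReal (Real.exp (-(ε^2) / (2*V))) := by
    intro s h
    rw [← ENNReal.ofReal_toReal (measure_ne_top μ s)]
    exact ENNReal.ofReal_le_ofReal h
  calc μ {ω | ε < |S ω|} ≤ μ ({ω | ε ≤ S ω} ∪ {ω | S ω ≤ -ε}) := measure_mono hsub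
    _ ≤ μ {ω | ε ≤ S ω} + μ {ω | S ω ≤ -ε} := measure_union_le _ _
    _ ≤ ENNReal.ofReal (Real.exp (-(ε^2) / (2*V))) + ENNReal.ofReal (Real.exp (-(ε^2) / (2*V))) :=
        add_le_add (hconv _ hup) (hconv _ hlo)
    _ = ENNReal.ofReal (2 * Real.exp (-(ε^2) / (2*V))) := by
        rw [← ENNReal.ofReal_add (Real.exp_pos _).le (Real.exp_pos _).le]
        congr 1
        ring

end aux

/-- **FAVOR+S inter-channel noise, Hoeffding bound.**
`P ≤ 2·∑_{(w,t), (u,w)≠(t,n)} exp(−Ξ_{(u,w)}^{(t,n)}/(2(NM−1)²))`. -/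
theorem stmt_11 {Ω : Type*} [MeasurableSpace Ω] (μ : Measure Ω) [IsProbabilityMeasure μ]
    (D M N : ℕ) (hD : 1 ≤ D) (hM : 1 ≤ M) (hN : 1 ≤ N)
    (u : Fin M) (n : Fin N)
    (kbar qbar : Fin M × Fin N → Fin D → ℝ)
    (a : Fin M × Fin N → Ω → Fin D → ℝ)
    (haval : ∀ c ω d, a c ω d = 1 ∨ a c ω d = -1)
    (hameas : ∀ c d, Measurable fun ω => a c ω d)
    (hindep : iIndepFun (m := fun _ : (Fin M × Fin N) × Fin D => (inferInstance : MeasurableSpace ℝ))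
      (fun p ω => a p.1 ω p.2) μ)
    (hadist : ∀ c d, Measure.map (fun ω => a c ω d) μ = rademacherMeasure)
    (α : ℝ) (hα : 0 < α)
    (hsig : (∑ d, kbar (u, n) d * qbar (u, n) d) ≠ 0) (hNM : 2 ≤ N * M)
    (hden : ∀ (w : Fin N) (t : Fin M), ((u, w) : Fin M × Fin N) ≠ (t, n) →
      0 < ∑ p, (kbar (u, w) p) ^ 2 * (qbar (t, n) p) ^ 2) :
    μ {ω | (∑ d, (∑ w, kbar (u, w) d * a (u, w) ω d) * (∑ t, qbar (t, n) d * a (t, n) ω d)) ∉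
        (fun s => s * ∑ d, kbar (u, n) d * qbar (u, n) d) '' Set.Icc (1 - α) (1 + α)} ≤
      ENNReal.ofReal (2 * ∑ p ∈ (Finset.univ : Finset (Fin N × Fin M)).filter
          (fun p => ((u, p.1) : Fin M × Fin N) ≠ (p.2, n)),
        Real.exp (-(Xi D α (∑ d, kbar (u, n) d * qbar (u, n) d) (kbar (u, p.1)) (qbar (p.2, n)))
          / (2 * ((N : ℝ) * M - 1) ^ 2))) := by
  classical
  set c : ℝ := ∑ d, kbar (u, n) d * qbar (u, n) d with hc
  set F : Finset (Fin N × Fin M) := (Finset.univ : Finset (Fin N × Fin M)).filter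
    (fun p => ((u, p.1) : Fin M × Fin N) ≠ (p.2, n)) with hF
  set Y : Fin N × Fin M → Ω → ℝ := fun p ω =>
    ∑ d, kbar (u, p.1) d * qbar (p.2, n) d * (a (u, p.1) ω d * a (p.2, n) ω d) with hY
  set K : ℝ := (N : ℝ) * M - 1 with hK
  have hKnat : ((N * M - 1 : ℕ) : ℝ) = K := by
    rw [hK]; push_cast [Nat.cast_sub (by omega : 1 ≤ N * M)]; ring
  have hKpos : (0 : ℝ) < K := by
    rw [← hKnat]
    have : 1 ≤ N * M - 1 := by omega
    exact_mod_cast Nat.lt_of_lt_of_le Nat.zero_lt_one this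
  have hcabs : 0 < |c| := abs_pos.2 hsig
  set ε : ℝ := α * |c| / K with hε
  have hεpos : 0 < ε := div_pos (mul_pos hα hcabs) hKpos
  -- decomposition
  have hdecomp : ∀ ω, (∑ d, (∑ w, kbar (u, w) d * a (u, w) ω d) *
      (∑ t, qbar (t, n) d * a (t, n) ω d)) = c + ∑ p ∈ F, Y p ω := by
    intro ω
    have hfilternot : (Finset.univ : Finset (Fin N × Fin M)).filter
        (fun p => ¬((u, p.1) : Fin M × Fin N) ≠ (p.2, n)) = {(n, u)} := by
      ext p
      simp only [Finset.mem_filter, Finset.mem_univ, true_and, not_not, Finset.mem_singleton,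
        Prod.ext_iff, Prod.mk.injEq]
      constructor
      · rintro ⟨h1, h2⟩; exact ⟨h2, h1.symm⟩
      · rintro ⟨h1, h2⟩; exact ⟨h2.symm, h1⟩
    calc (∑ d, (∑ w, kbar (u, w) d * a (u, w) ω d) * (∑ t, qbar (t, n) d * a (t, n) ω d))
        = ∑ d, ∑ w, ∑ t, kbar (u, w) d * qbar (t, n) d * (a (u, w) ω d * a (t, n) ω d) := by
          refine Finset.sum_congr rfl fun d _ => ?_
          rw [Finset.sum_mul_sum]
          exact Finset.sum_congr rfl fun w _ => Finset.sum_congr rfl fun t _ => by ring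
      _ = ∑ w, ∑ t, ∑ d, kbar (u, w) d * qbar (t, n) d * (a (u, w) ω d * a (t, n) ω d) := by
          rw [Finset.sum_comm]
          exact Finset.sum_congr rfl fun w _ => Finset.sum_comm
      _ = ∑ p : Fin N × Fin M, Y p ω := by
          rw [← Finset.univ_product_univ, Finset.sum_product]
      _ = (∑ p ∈ F, Y p ω) + ∑ p ∈ (Finset.univ : Finset (Fin N × Fin M)).filter
            (fun p => ¬((u, p.1) : Fin M × Fin N) ≠ (p.2, n)), Y p ω :=
          (Finset.sum_filter_add_sum_filter_not _ _ _).symm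
      _ = c + ∑ p ∈ F, Y p ω := by
          rw [hfilternot, Finset.sum_singleton, add_comm]
          congr 1
          rw [hY, hc]
          refine Finset.sum_congr rfl fun d _ => ?_
          rcases haval (u, n) ω d with h | h <;> rw [h] <;> ring
  -- event rewriting
  have hset : {ω | (∑ d, (∑ w, kbar (u, w) d * a (u, w) ω d) *
        (∑ t, qbar (t, n) d * a (t, n) ω d)) ∉
        (fun s => s * c) '' Set.Icc (1 - α) (1 + α)}
      = {ω | α * |c| < |∑ p ∈ F, Y p ω|} := by
    ext ω
    simp only [Set.mem_setOf_eq, hdecomp ω]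
    rw [← not_le]
    apply not_congr
    constructor
    · rintro ⟨s, hs, heq⟩
      rw [Set.mem_Icc] at hs
      have h' : s * c = c + ∑ p ∈ F, Y p ω := heq
      have hR : (∑ p ∈ F, Y p ω) = (s - 1) * c := by linarith
      rw [hR, abs_mul]
      have h1 : |s - 1| ≤ α := abs_le.2 ⟨by linarith, by linarith⟩
      exact mul_le_mul_of_nonneg_right h1 (abs_nonneg c)
    · intro h
      refine ⟨(c + ∑ p ∈ F, Y p ω) / c, ?_, div_mul_cancel₀ _ hsig⟩
      have hq : |(∑ p ∈ F, Y p ω) / c| ≤ α := by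
        rw [abs_div]
        rw [div_le_iff₀ hcabs]
        linarith [h]
      rw [Set.mem_Icc]
      have heq : (c + ∑ p ∈ F, Y p ω) / c = 1 + (∑ p ∈ F, Y p ω) / c := by
        field_simp
      rw [heq]
      rcases abs_le.1 hq with ⟨h1, h2⟩
      constructor <;> linarith
  rw [hset]
  -- mean-zero coordinates
  have hmean : ∀ q : (Fin M × Fin N) × Fin D, ∫ ω, a q.1 ω q.2 ∂μ = 0 := by
    intro q
    have h1 : ∫ ω, a q.1 ω q.2 ∂μ = ∫ x, x ∂(Measure.map (fun ω => a q.1 ω q.2) μ) :=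
      (integral_map (hameas q.1 q.2).aemeasurable aestronglyMeasurable_id).symm
    rw [h1, hadist q.1 q.2, rademacher_integral_id]
  -- per-pair tail bound
  have htail : ∀ p ∈ F, μ {ω | ε < |Y p ω|}
      ≤ ENNReal.ofReal (2 * Real.exp (-(Xi D α c (kbar (u, p.1)) (qbar (p.2, n)))
          / (2 * K ^ 2))) := by
    intro p hp
    have hpne : ((u, p.1) : Fin M × Fin N) ≠ (p.2, n) := (Finset.mem_filter.1 hp).2
    have hVpos : 0 < ∑ d, (kbar (u, p.1) d * qbar (p.2, n) d) ^ 2 := by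
      have := hden p.1 p.2 hpne
      simpa [mul_pow] using this
    have h := chaos_tail μ (fun q ω => haval q.1 ω q.2) (fun q => hameas q.1 q.2) hindep hmean
      (fun d => (((u, p.1) : Fin M × Fin N), d)) (fun d => (((p.2, n) : Fin M × Fin N), d))
      (fun d d' h => by simpa using congrArg Prod.snd h)
      (fun d d' h => by simpa using congrArg Prod.snd h)
      (fun d d' h => hpne (congrArg Prod.fst h))
      (fun d => kbar (u, p.1) d * qbar (p.2, n) d) ε hεpos hVpos
    have harg : -(ε ^ 2) / (2 * ∑ d, (kbar (u, p.1) d * qbar (p.2, n) d) ^ 2)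
        = -(Xi D α c (kbar (u, p.1)) (qbar (p.2, n))) / (2 * K ^ 2) := by
      rw [Xi, hε]
      have hVeq : ∑ d, (kbar (u, p.1)) d ^ 2 * (qbar (p.2, n)) d ^ 2
          = ∑ d, (kbar (u, p.1) d * qbar (p.2, n) d) ^ 2 := by
        exact Finset.sum_congr rfl fun d _ => (mul_pow _ _ _).symm
      rw [← hVeq]
      set V : ℝ := ∑ d, (kbar (u, p.1)) d ^ 2 * (qbar (p.2, n)) d ^ 2 with hVd
      have hV : 0 < V := hden p.1 p.2 hpne
      have hc2 : |c| ^ 2 = c ^ 2 := sq_abs c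
      field_simp
      rw [sq_abs]
    rw [harg] at h
    exact h
  -- union bound
  have hcard : (F.card : ℝ) = K := by
    have hFeq : F = (Finset.univ : Finset (Fin N × Fin M)).filter (fun p => p ≠ (n, u)) := by
      rw [hF]
      apply Finset.filter_congr
      intro p _
      simp only [ne_eq, Prod.ext_iff, Prod.mk.injEq, not_iff_not]
      constructor
      · rintro ⟨h1, h2⟩; exact ⟨h2, h1.symm⟩
      · rintro ⟨h1, h2⟩; exact ⟨h2.symm, h1⟩
    rw [hFeq, Finset.filter_ne', Finset.card_erase_of_mem (Finset.mem_univ _)]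
    simp only [Finset.card_univ, Fintype.card_prod, Fintype.card_fin]
    exact hKnat
  have hsub : {ω | α * |c| < |∑ p ∈ F, Y p ω|} ⊆ ⋃ p ∈ F, {ω | ε < |Y p ω|} := by
    intro ω hω
    simp only [Set.mem_setOf_eq] at hω
    by_contra hcon
    simp only [Set.mem_iUnion, Set.mem_setOf_eq, not_exists, not_lt] at hcon
    have : |∑ p ∈ F, Y p ω| ≤ α * |c| := by
      calc |∑ p ∈ F, Y p ω| ≤ ∑ p ∈ F, |Y p ω| := Finset.abs_sum_le_sum_abs _ _
        _ ≤ ∑ p ∈ F, ε := Finset.sum_le_sum fun p hp => hcon p hp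
        _ = F.card * ε := by rw [Finset.sum_const, nsmul_eq_mul]
        _ = α * |c| := by rw [hcard, hε, mul_div_cancel₀ _ hKpos.ne']
    linarith
  calc μ {ω | α * |c| < |∑ p ∈ F, Y p ω|} ≤ μ (⋃ p ∈ F, {ω | ε < |Y p ω|}) := measure_mono hsub
    _ ≤ ∑ p ∈ F, μ {ω | ε < |Y p ω|} := measure_biUnion_finset_le _ _
    _ ≤ ∑ p ∈ F, ENNReal.ofReal (2 * Real.exp (-(Xi D α c (kbar (u, p.1)) (qbar (p.2, n)))
          / (2 * K ^ 2))) := Finset.sum_le_sum htail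
    _ = ENNReal.ofReal (2 * ∑ p ∈ F, Real.exp (-(Xi D α c (kbar (u, p.1)) (qbar (p.2, n)))
          / (2 * K ^ 2))) := by
        rw [Finset.mul_sum, ENNReal.ofReal_sum_of_nonneg]
        intro p _
        positivity
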